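/- Let B denote the class of positive sequences b = (b_n)_{n∈ℕ} that are non-increasing, tend to zero, and satisfy ∑_{n} b_n = +∞. If T is a bounded operator on a separable infinite-dimensional Banach space X which is U-frequently hypercyclic with respect to some b ∈ B, then for every n ≥ 1 the n-fold product T × ⋯ × T is U-frequently hypercyclic with respect to b. -/

import Mathlib

open Filter Topology

/-- The weighted sum `∑_{j=0}^{N} a_j · 1_A(j)`. -/
noncomputable def wSum (a : ℕ → ℝ) (A : Set ℕ) (N : ℕ) : ℝ :=
  ∑ j ∈ Finset.range (N + 1), Set.indicator A a j

/-- The upper `a`-density `d̄_a(A)`. -/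
noncomputable def upperDensWith (a : ℕ → ℝ) (A : Set ℕ) : ℝ :=
  Filter.limsup (fun N => wSum a A N / ∑ j ∈ Finset.range (N + 1), a j) Filter.atTop

/-- The lower `a`-density `d_a(A)`. -/
noncomputable def lowerDensWith (a : ℕ → ℝ) (A : Set ℕ) : ℝ :=
  Filter.liminf (fun N => wSum a A N / ∑ j ∈ Finset.range (N + 1), a j) Filter.atTop

/-- The (unweighted) upper density `d̄(A)`. -/
noncomputable def upperDens (A : Set ℕ) : ℝ :=
  Filter.limsup
    (fun N : ℕ => (∑ j ∈ Finset.range (N + 1), Set.indicator A (fun _ => (1 : ℝ)) j) / (N + 1))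
    Filter.atTop

/-- The upper Banach density `B̄d(A) = lim_N b_N / N`, `b_N = limsup_k #(A ∩ [k+1, k+N])`
(the limit exists, so it coincides with the limsup used here). -/
noncomputable def upperBanachDens (A : Set ℕ) : ℝ :=
  Filter.limsup
    (fun N : ℕ =>
      (Filter.limsup
          (fun k : ℕ => ∑ j ∈ Finset.Icc (k + 1) (k + N), Set.indicator A (fun _ => (1 : ℝ)) j)
          Filter.atTop) / (N : ℝ))
    Filter.atTop

/-- `v_n(a) = a_n / ∑_{j=0}^{n-1} a_j`. -/
noncomputable def vSeq (a : ℕ → ℝ) (n : ℕ) : ℝ := a n / ∑ j ∈ Finset.range n, a j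

/-- The class `S` of weights: positive non-decreasing sequences tending to `+∞` such that
`(v_n(a))_{n ≥ 1}` is non-increasing and tends to `0`. -/
def memS (a : ℕ → ℝ) : Prop :=
  (∀ n, 0 < a n) ∧ Monotone a ∧ Filter.Tendsto a Filter.atTop Filter.atTop ∧
    (∀ m n : ℕ, 1 ≤ m → m ≤ n → vSeq a n ≤ vSeq a m) ∧
    Filter.Tendsto (vSeq a) Filter.atTop (nhds 0)

/-- `A - k = {n : n + k ∈ A}`. -/
def shiftSet (A : Set ℕ) (k : ℕ) : Set ℕ := {n : ℕ | n + k ∈ A}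

/-- A set of natural numbers has bounded gaps (is syndetic). -/
def Syndetic (K : Set ℕ) : Prop := ∃ m : ℕ, ∀ n : ℕ, (K ∩ Set.Icc n (n + m)).Nonempty

/-- The return set `N(x, U) = {n : T^n x ∈ U}`. -/
def retSet {X : Type*} [NormedAddCommGroup X] [NormedSpace ℂ X] (T : X →L[ℂ] X) (x : X)
    (U : Set X) : Set ℕ :=
  {n : ℕ | (T ^ n) x ∈ U}

/-- The set of hypercyclic vectors of `T`. -/
def HCSet {X : Type*} [NormedAddCommGroup X] [NormedSpace ℂ X] (T : X →L[ℂ] X) : Set X :=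
  {x : X | Dense (Set.range fun n : ℕ => (T ^ n) x)}

/-- The set of `U`-frequently hypercyclic vectors of `T`. -/
def UFHCSet {X : Type*} [NormedAddCommGroup X] [NormedSpace ℂ X] (T : X →L[ℂ] X) : Set X :=
  {x : X | ∀ U : Set X, IsOpen U → U.Nonempty → 0 < upperDens (retSet T x U)}

/-- The set of `U`-frequently hypercyclic vectors of `T` with respect to the weight `a`. -/
def UFHCaSet {X : Type*} [NormedAddCommGroup X] [NormedSpace ℂ X] (a : ℕ → ℝ)
    (T : X →L[ℂ] X) : Set X :=
  {x : X | ∀ U : Set X, IsOpen U → U.Nonempty → 0 < upperDensWith a (retSet T x U)}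

/-- The set of reiteratively hypercyclic vectors of `T`. -/
def RHCSet {X : Type*} [NormedAddCommGroup X] [NormedSpace ℂ X] (T : X →L[ℂ] X) : Set X :=
  {x : X | ∀ U : Set X, IsOpen U → U.Nonempty → 0 < upperBanachDens (retSet T x U)}

/-- `T` is `𝒜`-hypercyclic. -/
def AHC {X : Type*} [NormedAddCommGroup X] [NormedSpace ℂ X] (𝒜 : Set (Set ℕ))
    (T : X →L[ℂ] X) : Prop :=
  ∃ x : X, ∀ U : Set X, IsOpen U → U.Nonempty → retSet T x U ∈ 𝒜

/-- The `n`-fold product `T × ⋯ × T` acting diagonally on `Fin n → X`. -/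
noncomputable def nfold {X : Type*} [NormedAddCommGroup X] [NormedSpace ℂ X] (T : X →L[ℂ] X)
    (n : ℕ) : (Fin n → X) →L[ℂ] (Fin n → X) :=
  ContinuousLinearMap.pi fun i => T.comp (ContinuousLinearMap.proj i)

/-- The class `B` of positive non-increasing sequences tending to `0` whose series diverges. -/
def memB (b : ℕ → ℝ) : Prop :=
  (∀ n, 0 < b n) ∧ Antitone b ∧ Filter.Tendsto b Filter.atTop (nhds 0) ∧
    Filter.Tendsto (fun N => ∑ j ∈ Finset.range N, b j) Filter.atTop Filter.atTop

/-!
Write `N(P, Q) = {n | T^n P ∩ Q ≠ ∅}`, and call `A ⊆ ℕ` heavy when it has positive upper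
`b`-density. Because `b` is non-increasing, heaviness survives translation, and a weighted
Khintchine recurrence theorem (Cauchy–Schwarz on many translates of `A`) shows that for heavy `A`
the gaps `e` with `A ∩ (A - e)` heavy form a syndetic set, with a density constant depending only
on that of `A`. Applied to returns of the `U`-frequently hypercyclic vector `x` near itself, this
makes every `N(P, Q)` syndetic; adding a vector near `0` that is carried into `Q` makes it thick
as well. Intersecting syndetic sets of good gaps with thick transit sets coordinate by coordinate,
one finds for any `u ∈ Xⁿ` exponents `mᵢ` with `T^{mᵢ} x` near `uᵢ` whose joint return set to a
fixed box `∏ Vᵢ` is heavy with a constant independent of `u`. So for every open `V ⊆ Xⁿ` the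
vectors returning to `V` with a fixed density form a dense set, and Baire's theorem over a
countable basis produces a `U`-frequently hypercyclic vector of `T × ⋯ × T`.
-/

open Pointwise

noncomputable def cumWeight (b : ℕ → ℝ) (N : ℕ) : ℝ := ∑ j ∈ Finset.range (N + 1), b j

/-- `A` has positive upper `b`-density iff `IsHeavy b A δ` for some `δ > 0`. -/
def IsHeavy (b : ℕ → ℝ) (A : Set ℕ) (δ : ℝ) : Prop :=
  ∃ᶠ N in atTop, δ * cumWeight b N ≤ wSum b A N

structure IsDivergentWeight (b : ℕ → ℝ) : Prop where
  pos : ∀ n, 0 < b n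
  antitone : Antitone b
  tendsto_cumWeight : Tendsto (cumWeight b) atTop atTop

lemma IsDivergentWeight.nonneg {b : ℕ → ℝ} (hb : IsDivergentWeight b) : 0 ≤ b :=
  fun n => (hb.pos n).le

lemma memB.isDivergentWeight {b : ℕ → ℝ} (hb : memB b) : IsDivergentWeight b :=
  ⟨hb.1, hb.2.1, hb.2.2.2.comp (tendsto_add_atTop_nat 1)⟩

lemma mem_shiftSet {A : Set ℕ} {k n : ℕ} : n ∈ shiftSet A k ↔ n + k ∈ A := Iff.rfl

lemma shiftSet_mono {A B : Set ℕ} (h : A ⊆ B) (k : ℕ) : shiftSet A k ⊆ shiftSet B k :=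
  fun _ hn => h hn

section WeightedSums

variable {b : ℕ → ℝ}

lemma cumWeight_pos (hb : ∀ n, 0 < b n) (N : ℕ) : 0 < cumWeight b N :=
  Finset.sum_pos (fun j _ => hb j) Finset.nonempty_range_add_one

lemma cumWeight_mono (hb : 0 ≤ b) : Monotone (cumWeight b) := fun _ _ h =>
  Finset.sum_le_sum_of_subset_of_nonneg (Finset.range_subset_range.2 (by omega))
    fun j _ _ => hb j

lemma wSum_nonneg (hb : 0 ≤ b) (A : Set ℕ) (N : ℕ) : 0 ≤ wSum b A N :=
  Finset.sum_nonneg fun j _ => Set.indicator_nonneg (fun j _ => hb j) j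

lemma wSum_le_cumWeight (hb : 0 ≤ b) (A : Set ℕ) (N : ℕ) : wSum b A N ≤ cumWeight b N :=
  Finset.sum_le_sum fun j _ => Set.indicator_le_self' (fun j _ => hb j) j

lemma wSum_le_wSum (hb : 0 ≤ b) {A B : Set ℕ} {N : ℕ} (h : ∀ j ≤ N, j ∈ A → j ∈ B) :
    wSum b A N ≤ wSum b B N := by
  refine Finset.sum_le_sum fun j hj => ?_
  by_cases hjA : j ∈ A
  · rw [Set.indicator_of_mem hjA, Set.indicator_of_mem (h j (by simp at hj; omega) hjA)]
  · rw [Set.indicator_of_notMem hjA]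
    exact Set.indicator_nonneg (fun j _ => hb j) j

lemma wSum_monotone (hb : 0 ≤ b) (A : Set ℕ) : Monotone (wSum b A) := fun _ _ h =>
  Finset.sum_le_sum_of_subset_of_nonneg (Finset.range_subset_range.2 (by omega))
    fun j _ _ => Set.indicator_nonneg (fun j _ => hb j) j

lemma wSum_empty (N : ℕ) : wSum b ∅ N = 0 := by simp [wSum]

lemma sum_range_le (hanti : Antitone b) (s : ℕ) : ∑ j ∈ Finset.range s, b j ≤ s * b 0 :=
  (Finset.sum_le_sum fun j _ => hanti j.zero_le).trans_eq (by simp)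

lemma cumWeight_add (N s : ℕ) :
    cumWeight b (N + s) = ∑ j ∈ Finset.range s, b j + ∑ i ∈ Finset.range (N + 1), b (s + i) := by
  rw [cumWeight, show N + s + 1 = s + (N + 1) by omega, Finset.sum_range_add]

lemma cumWeight_add_le (hanti : Antitone b) (N s : ℕ) :
    cumWeight b (N + s) ≤ cumWeight b N + s * b 0 := by
  have : ∑ i ∈ Finset.range (N + 1), b (s + i) ≤ cumWeight b N :=
    Finset.sum_le_sum fun i _ => hanti (Nat.le_add_left i s)
  linarith [cumWeight_add (b := b) N s, sum_range_le hanti s]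

lemma wSum_add (A : Set ℕ) (N s : ℕ) : wSum b A (N + s) =
    ∑ j ∈ Finset.range s, A.indicator b j + ∑ i ∈ Finset.range (N + 1), A.indicator b (s + i) := by
  rw [wSum, show N + s + 1 = s + (N + 1) by omega, Finset.sum_range_add]

lemma wSum_le_wSum_shiftSet_add (hb : 0 ≤ b) (hanti : Antitone b) (A : Set ℕ) (s N : ℕ) :
    wSum b A (N + s) ≤ wSum b (shiftSet A s) N + s * b 0 := by
  classical
  have hhead : ∑ j ∈ Finset.range s, A.indicator b j ≤ ∑ j ∈ Finset.range s, b j :=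
    Finset.sum_le_sum fun j _ => Set.indicator_le_self' (fun j _ => hb j) j
  have htail : ∑ i ∈ Finset.range (N + 1), A.indicator b (s + i) ≤ wSum b (shiftSet A s) N := by
    refine Finset.sum_le_sum fun i _ => ?_
    simp only [Set.indicator_apply, mem_shiftSet, add_comm i s]
    split_ifs
    · exact hanti (Nat.le_add_left i s)
    · exact le_rfl
  linarith [wSum_add (b := b) A N s, sum_range_le hanti s]

lemma wSum_shiftSet_le (hb : 0 ≤ b) (hanti : Antitone b) (A : Set ℕ) (s N : ℕ) :
    wSum b (shiftSet A s) N ≤ wSum b A (N + s) + s * b 0 := by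
  classical
  -- the weight lost by moving `A - s` up to `A` telescopes to at most `∑_{j<s} b j`
  have hterm : ∀ i, (shiftSet A s).indicator b i ≤ A.indicator b (s + i) + (b i - b (s + i)) :=
    fun i => by
      have := hanti (Nat.le_add_left i s)
      simp only [Set.indicator_apply, mem_shiftSet, add_comm i s]
      split_ifs <;> linarith [hb (s + i)]
  have hhead : 0 ≤ ∑ j ∈ Finset.range s, A.indicator b j :=
    Finset.sum_nonneg fun j _ => Set.indicator_nonneg (fun j _ => hb j) j
  calc wSum b (shiftSet A s) N ≤ ∑ i ∈ Finset.range (N + 1), A.indicator b (s + i) +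
        (cumWeight b N - ∑ i ∈ Finset.range (N + 1), b (s + i)) := by
        rw [cumWeight, ← Finset.sum_sub_distrib, ← Finset.sum_add_distrib]
        exact Finset.sum_le_sum fun i _ => hterm i
    _ ≤ wSum b A (N + s) + s * b 0 := by
        linarith [wSum_add (b := b) A N s, cumWeight_add (b := b) N s, sum_range_le hanti s,
          cumWeight_mono hb (Nat.le_add_right N s)]

end WeightedSums

section Heavy

variable {b : ℕ → ℝ} {A B : Set ℕ} {δ : ℝ}

lemma IsHeavy.mono (hb : 0 ≤ b) (h : IsHeavy b A δ) (hAB : A ⊆ B) : IsHeavy b B δ :=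
  Frequently.mono h fun _ hN => hN.trans (wSum_le_wSum hb fun _ _ hj => hAB hj)

lemma IsHeavy.upperDensWith_pos (hb : ∀ n, 0 < b n) (h : IsHeavy b A δ) (hδ : 0 < δ) :
    0 < upperDensWith b A := by
  have hfreq : ∃ᶠ N in atTop, δ ≤ wSum b A N / cumWeight b N :=
    Frequently.mono h fun N hN => (le_div_iff₀ (cumWeight_pos hb N)).2 hN
  have hbdd : IsBoundedUnder (· ≤ ·) atTop fun N => wSum b A N / cumWeight b N :=
    isBoundedUnder_of ⟨1, fun N =>
      div_le_one_of_le₀ (wSum_le_cumWeight (fun n => (hb n).le) A N) (cumWeight_pos hb N).le⟩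
  exact hδ.trans_le (le_limsup_of_frequently_le hfreq hbdd)

lemma exists_isHeavy_of_upperDensWith_pos (hb : ∀ n, 0 < b n) (h : 0 < upperDensWith b A) :
    ∃ δ > 0, IsHeavy b A δ := by
  have hcobdd : IsCoboundedUnder (· ≤ ·) atTop fun N => wSum b A N / cumWeight b N :=
    isCoboundedUnder_le_of_le atTop fun N =>
      div_nonneg (wSum_nonneg (fun n => (hb n).le) A N) (cumWeight_pos hb N).le
  refine ⟨upperDensWith b A / 2, half_pos h, ?_⟩
  exact (frequently_lt_of_lt_limsup hcobdd (half_lt_self h)).mono fun N hN =>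
    ((lt_div_iff₀ (cumWeight_pos hb N)).1 hN).le

lemma IsHeavy.nonempty (hb : ∀ n, 0 < b n) (h : IsHeavy b A δ) (hδ : 0 < δ) : A.Nonempty := by
  obtain ⟨N, hN⟩ := Frequently.exists h
  by_contra hA
  rw [Set.not_nonempty_iff_eq_empty.1 hA, wSum_empty] at hN
  nlinarith [cumWeight_pos hb N]

lemma IsHeavy.shift (hb : IsDivergentWeight b) (h : IsHeavy b A δ) (hδ : 0 < δ) (s : ℕ) :
    IsHeavy b (shiftSet A s) (δ / 2) := by
  have hlarge : ∀ᶠ M in atTop, s ≤ M ∧ 2 * (s * b 0) ≤ δ * cumWeight b (M - s) := by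
    refine (eventually_ge_atTop s).and
      (((hb.tendsto_cumWeight.comp (tendsto_sub_atTop_nat s)).eventually_ge_atTop
        (2 * (s * b 0) / δ)).mono fun M hM => ?_)
    rw [Function.comp_apply, div_le_iff₀ hδ] at hM
    linarith
  refine (tendsto_sub_atTop_nat s).frequently ((Frequently.and_eventually h hlarge).mono ?_)
  rintro M ⟨hM, hsM, hlarge⟩
  have hshift := wSum_le_wSum_shiftSet_add hb.nonneg hb.antitone A s (M - s)
  rw [Nat.sub_add_cancel hsM] at hshift
  have hcum := cumWeight_mono hb.nonneg (Nat.sub_le M s)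
  nlinarith

lemma IsHeavy.exists_add_mem (hb : IsDivergentWeight b) (h : IsHeavy b A δ) (hδ : 0 < δ)
    (k : ℕ) : ∃ n, n + k ∈ A :=
  (h.shift hb hδ k).nonempty hb.pos (half_pos hδ)

end Heavy

section Khintchine

variable {b : ℕ → ℝ} {A : Set ℕ} {θ : ℝ}

lemma shiftSet_inter_shiftSet (A : Set ℕ) {s s' : ℕ} (h : s ≤ s') :
    shiftSet A s ∩ shiftSet A s' = shiftSet (A ∩ shiftSet A (s' - s)) s := by
  ext n
  simp only [Set.mem_inter_iff, mem_shiftSet, show n + s + (s' - s) = n + s' by omega]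

lemma wSum_shiftSet_inter_shiftSet_le (hb : 0 ≤ b) (hanti : Antitone b) (A : Set ℕ) {s s' : ℕ}
    (h : s ≤ s') (N : ℕ) :
    wSum b (shiftSet A s ∩ shiftSet A s') N ≤
      wSum b (A ∩ shiftSet A (s' - s)) (N + s) + s * b 0 := by
  rw [shiftSet_inter_shiftSet A h]
  exact wSum_shiftSet_le hb hanti _ s N

lemma sq_sum_wSum_le (hb : 0 ≤ b) {ι : Type*} (s : Finset ι) (S : ι → Set ℕ) (N : ℕ) :
    (∑ i ∈ s, wSum b (S i) N) ^ 2 ≤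
      cumWeight b N * ∑ i ∈ s, ∑ i' ∈ s, wSum b (S i ∩ S i') N := by
  -- Cauchy–Schwarz against the multiplicity `F j = #{i ∈ s | j ∈ S i}`
  set F : ℕ → ℝ := fun j => ∑ i ∈ s, (S i).indicator 1 j
  have hind : ∀ (T : Set ℕ) j, T.indicator b j = b j * T.indicator 1 j := by
    intro T j
    by_cases hj : j ∈ T <;> simp [hj]
  have hlin : ∑ i ∈ s, wSum b (S i) N = ∑ j ∈ Finset.range (N + 1), b j * F j := by
    simp only [wSum, hind, F, Finset.mul_sum]
    exact Finset.sum_comm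
  have hquad : ∑ i ∈ s, ∑ i' ∈ s, wSum b (S i ∩ S i') N =
      ∑ j ∈ Finset.range (N + 1), b j * F j ^ 2 := by
    have hpt : ∀ j, b j * F j ^ 2 =
        ∑ i ∈ s, ∑ i' ∈ s, b j * ((S i).indicator 1 j * (S i').indicator 1 j) := fun j => by
      simp only [F]
      rw [sq, Finset.sum_mul_sum, Finset.mul_sum]
      simp only [Finset.mul_sum]
    simp only [hpt, wSum, hind, Set.inter_indicator_one, Pi.mul_apply]
    rw [eq_comm, Finset.sum_comm]
    exact Finset.sum_congr rfl fun i _ => Finset.sum_comm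
  rw [hlin, hquad]
  exact Finset.sum_sq_le_sum_mul_sum_of_sq_le_mul _ (fun j _ => hb j)
    (fun j _ => mul_nonneg (hb j) (sq_nonneg _)) fun j _ => le_of_eq (by ring)

lemma sum_sum_wSum_inter_le (hb : 0 ≤ b) (S : ℕ → Set ℕ) (r N : ℕ) {K : ℝ} (hK : 0 ≤ K)
    (h : ∀ i i', i < i' → i' < r → wSum b (S i ∩ S i') N ≤ K) :
    ∑ i ∈ Finset.range r, ∑ i' ∈ Finset.range r, wSum b (S i ∩ S i') N ≤
      r * cumWeight b N + r ^ 2 * K := by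
  calc _ ≤ ∑ i ∈ Finset.range r, ∑ i' ∈ Finset.range r,
        ((if i = i' then cumWeight b N else 0) + K) := by
        refine Finset.sum_le_sum fun i hi => Finset.sum_le_sum fun i' hi' => ?_
        simp only [Finset.mem_range] at hi hi'
        rcases lt_trichotomy i i' with hii' | rfl | hii'
        · simpa [hii'.ne] using h i i' hii' hi'
        · simpa using (wSum_le_cumWeight hb _ N).trans (le_add_of_nonneg_right hK)
        · simpa [hii'.ne', Set.inter_comm] using h i' i hii' hi
    _ = r * cumWeight b N + r ^ 2 * K := by
        have hdiag : ∀ i ∈ Finset.range r,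
            ∑ i' ∈ Finset.range r, (if i = i' then cumWeight b N else 0) = cumWeight b N :=
          fun i hi => by rw [Finset.sum_ite_eq, if_pos hi]
        simp only [Finset.sum_add_distrib, Finset.sum_congr rfl hdiag, Finset.sum_const,
          Finset.card_range, nsmul_eq_mul]
        ring

/-- If `A` has weight `θ τ` up to `N` (`τ = cumWeight b N`), its `r` translates `A - t i` have
total weight about `r θ τ`; once `r θ² ≥ 4` and `τ` is large, Cauchy–Schwarz forbids all their
pairwise overlaps to be `θ² / 4`-light. -/
lemma exists_lt_wSum_inter_shiftSet_ge (hb : IsDivergentWeight b) (hθ : 0 < θ) {t : ℕ → ℕ}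
    (ht : Monotone t) {r : ℕ} (hr : 4 ≤ r * θ ^ 2) {N : ℕ} (hA : θ * cumWeight b N ≤ wSum b A N)
    (hN : 2 * (2 * θ + θ ^ 2 / 4 + 1) * (t r * b 0) < θ ^ 2 * cumWeight b N) :
    ∃ i j, i < j ∧ j < r ∧
      θ ^ 2 / 4 * cumWeight b (N + t i) ≤ wSum b (A ∩ shiftSet A (t j - t i)) (N + t i) := by
  by_contra! hlight
  set c : ℝ := t r * b 0
  set τ := cumWeight b N
  set S : ℕ → Set ℕ := fun i => shiftSet A (t i)
  have hc : 0 ≤ c := mul_nonneg (Nat.cast_nonneg _) (hb.nonneg 0)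
  have hτ : 0 < τ := cumWeight_pos hb.pos N
  have htc : ∀ i < r, (t i : ℝ) * b 0 ≤ c := fun i hi =>
    mul_le_mul_of_nonneg_right (by exact_mod_cast ht hi.le) (hb.nonneg 0)
  have hlin : r * (θ * τ - c) ≤ ∑ i ∈ Finset.range r, wSum b (S i) N := by
    have hterm : ∀ i ∈ Finset.range r, θ * τ - c ≤ wSum b (S i) N := fun i hi => by
      linarith [wSum_monotone hb.nonneg A (Nat.le_add_right N (t i)),
        wSum_le_wSum_shiftSet_add hb.nonneg hb.antitone A (t i) N, htc i (Finset.mem_range.1 hi)]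
    have := Finset.sum_le_sum hterm
    rwa [Finset.sum_const, Finset.card_range, nsmul_eq_mul] at this
  have hquad := sum_sum_wSum_inter_le hb.nonneg S r N (K := θ ^ 2 / 4 * (τ + c) + c)
    (by positivity) fun i i' hii' hi' => by
      have hi := hii'.trans hi'
      nlinarith [wSum_shiftSet_inter_shiftSet_le hb.nonneg hb.antitone A (ht hii'.le) N,
        hlight i i' hii' hi', cumWeight_add_le hb.antitone N (t i), htc i hi]
  have hr0 : (0 : ℝ) < r := by
    rcases Nat.eq_zero_or_pos r with h | h
    · simp [h] at hr; linarith
    · exact_mod_cast h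
  have hθτ : c ≤ θ * τ := by
    have h4 : θ * (4 * c) < θ * (θ * τ) := by nlinarith
    linarith [lt_of_mul_lt_mul_left h4 hθ.le]
  have hrτ : r * τ ^ 2 * 4 ≤ r * τ ^ 2 * (r * θ ^ 2) :=
    mul_le_mul_of_nonneg_left hr (by positivity)
  have hmain : (r : ℝ) ^ 2 * (θ * τ - c) ^ 2 ≤
      r ^ 2 * (θ ^ 2 * τ ^ 2 / 2 + (θ ^ 2 / 4 + 1) * c * τ) :=
    calc (r : ℝ) ^ 2 * (θ * τ - c) ^ 2 = (r * (θ * τ - c)) ^ 2 := by ring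
      _ ≤ (∑ i ∈ Finset.range r, wSum b (S i) N) ^ 2 := pow_le_pow_left₀ (by nlinarith) hlin 2
      _ ≤ τ * ∑ i ∈ Finset.range r, ∑ i' ∈ Finset.range r, wSum b (S i ∩ S i') N :=
          sq_sum_wSum_le hb.nonneg (Finset.range r) S N
      _ ≤ τ * (r * τ + r ^ 2 * (θ ^ 2 / 4 * (τ + c) + c)) :=
          mul_le_mul_of_nonneg_left hquad hτ.le
      _ ≤ r ^ 2 * (θ ^ 2 * τ ^ 2 / 2 + (θ ^ 2 / 4 + 1) * c * τ) := by linarith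
  have hmain' := le_of_mul_le_mul_left hmain (by positivity)
  nlinarith [mul_lt_mul_of_pos_left hN hτ]

theorem IsHeavy.exists_isHeavy_inter_shiftSet_sub (hb : IsDivergentWeight b)
    (hA : IsHeavy b A θ) (hθ : 0 < θ) {t : ℕ → ℕ} (ht : Monotone t) {r : ℕ}
    (hr : 4 ≤ r * θ ^ 2) :
    ∃ i j, i < j ∧ j < r ∧ IsHeavy b (A ∩ shiftSet A (t j - t i)) (θ ^ 2 / 4) := by
  by_contra! hlight
  have hpairs : ∀ᶠ N in atTop, ∀ i ∈ Finset.range r, ∀ j ∈ Finset.range r, i < j →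
      wSum b (A ∩ shiftSet A (t j - t i)) (N + t i) < θ ^ 2 / 4 * cumWeight b (N + t i) := by
    refine (eventually_all_finset _).2 fun i _ => (eventually_all_finset _).2 fun j hj => ?_
    by_cases hij : i < j
    · exact ((tendsto_add_atTop_nat (t i)).eventually
        (not_frequently.1 (hlight i j hij (Finset.mem_range.1 hj)))).mono
        fun N hN _ => lt_of_not_ge hN
    · exact Eventually.of_forall fun N h => absurd h hij
  have hlarge := hb.tendsto_cumWeight.eventually_gt_atTop
    (2 * (2 * θ + θ ^ 2 / 4 + 1) * (t r * b 0) / θ ^ 2)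
  obtain ⟨N, hAN, hpair, hN⟩ := (Frequently.and_eventually hA (hpairs.and hlarge)).exists
  rw [div_lt_iff₀ (by positivity), mul_comm _ (θ ^ 2)] at hN
  obtain ⟨i, j, hij, hjr, hge⟩ := exists_lt_wSum_inter_shiftSet_ge hb hθ ht hr hAN hN
  exact (hpair i (Finset.mem_range.2 (hij.trans hjr)) j (Finset.mem_range.2 hjr) hij).not_ge hge

lemma exists_monotone_sub_notMem_of_not_syndetic {K : Set ℕ} (hK : ¬ Syndetic K) :
    ∃ t : ℕ → ℕ, Monotone t ∧ ∀ i j, i < j → t j - t i ∉ K := by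
  simp only [Syndetic, not_exists, not_forall, Set.not_nonempty_iff_eq_empty] at hK
  choose g hg using hK
  -- each new term jumps past a gap of `K` longer than the previous term
  let t : ℕ → ℕ := fun k => Nat.rec 0 (fun _ tk => g (tk + 1) + tk + 1) k
  have htsucc : ∀ k, t (k + 1) = g (t k + 1) + t k + 1 := fun _ => rfl
  have ht : Monotone t := monotone_nat_of_le_succ fun k => by rw [htsucc]; omega
  refine ⟨t, ht, fun i j hij hK' => ?_⟩
  obtain ⟨k, rfl⟩ : ∃ k, j = k + 1 := ⟨j - 1, by omega⟩
  have hik := ht (Nat.le_of_lt_succ hij)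
  have hmem : t (k + 1) - t i ∈ K ∩ Set.Icc (g (t k + 1)) (g (t k + 1) + (t k + 1)) :=
    ⟨hK', by rw [htsucc]; constructor <;> omega⟩
  rw [hg] at hmem
  exact hmem

theorem IsHeavy.syndetic_isHeavy_inter_shiftSet (hb : IsDivergentWeight b)
    (hA : IsHeavy b A θ) (hθ : 0 < θ) :
    Syndetic {e | IsHeavy b (A ∩ shiftSet A e) (θ ^ 2 / 4)} := by
  by_contra hK
  obtain ⟨t, ht, hnot⟩ := exists_monotone_sub_notMem_of_not_syndetic hK
  obtain ⟨r, hr⟩ := exists_nat_ge (4 / θ ^ 2)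
  obtain ⟨i, j, hij, -, hheavy⟩ :=
    hA.exists_isHeavy_inter_shiftSet_sub hb hθ ht (r := r) ((div_le_iff₀ (by positivity)).1 hr)
  exact hnot i j hij hheavy

end Khintchine

def IsThick (K : Set ℕ) : Prop := ∀ L, ∃ t, ∀ s ≤ L, t + s ∈ K

lemma IsThick.shift {Θ : Set ℕ} (hΘ : IsThick Θ) (k : ℕ) : IsThick (shiftSet Θ k) := fun L => by
  obtain ⟨a, ha⟩ := hΘ (L + k)
  exact ⟨a, fun s hs => by simpa [mem_shiftSet, add_assoc] using ha (s + k) (by omega)⟩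

lemma Syndetic.of_add_mem {D K : Set ℕ} (hD : Syndetic D) (c : ℕ) (h : ∀ e ∈ D, e + c ∈ K) :
    Syndetic K := by
  obtain ⟨m, hm⟩ := hD
  refine ⟨m + c, fun n => ?_⟩
  obtain ⟨e, heD, he⟩ := hm n
  exact ⟨e + c, h e heD, by simp only [Set.mem_Icc] at he ⊢; omega⟩

lemma Syndetic.exists_forall_add_mem {K Θ : Set ℕ} (hK : Syndetic K) (hΘ : IsThick Θ) (L : ℕ) :
    ∃ t ∈ K, ∀ s ≤ L, t + s ∈ Θ := by
  obtain ⟨m, hm⟩ := hK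
  obtain ⟨a, ha⟩ := hΘ (m + L)
  obtain ⟨t, htK, hta, htm⟩ := hm a
  refine ⟨t, htK, fun s hs => ?_⟩
  simpa [show a + (t - a + s) = t + s by omega] using ha (t - a + s) (by omega)

section Dynamics

variable {X : Type*} [NormedAddCommGroup X] [NormedSpace ℂ X] {T : X →L[ℂ] X} {x : X}
  {b : ℕ → ℝ}

def transitSet (T : X →L[ℂ] X) (U V : Set X) : Set ℕ := {n | ∃ y ∈ U, (T ^ n) y ∈ V}

lemma pow_add_apply (T : X →L[ℂ] X) (m n : ℕ) (v : X) : (T ^ (m + n)) v = (T ^ m) ((T ^ n) v) := by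
  rw [pow_add]
  rfl

lemma transitSet_mono {U U' V V' : Set X} (hU : U ⊆ U') (hV : V ⊆ V') :
    transitSet T U V ⊆ transitSet T U' V' :=
  fun _ ⟨y, hy, hTy⟩ => ⟨y, hU hy, hV hTy⟩

lemma transitSet_inter_subset_add (U U' V V' : Set X) :
    transitSet T U V ∩ transitSet T U' V' ⊆ transitSet T (U + U') (V + V') := by
  rintro n ⟨⟨y, hy, hTy⟩, ⟨y', hy', hTy'⟩⟩
  exact ⟨y + y', Set.add_mem_add hy hy', by rw [map_add]; exact Set.add_mem_add hTy hTy'⟩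

lemma isOpen_setOf_forall_le_pow_apply_mem (T : X →L[ℂ] X) {V : Set X} (hV : IsOpen V)
    (L : ℕ) : IsOpen {z | ∀ i ≤ L, (T ^ i) z ∈ V} := by
  have : {z | ∀ i ≤ L, (T ^ i) z ∈ V} = ⋂ i ∈ Set.Iic L, (T ^ i) ⁻¹' V := by ext; simp
  rw [this]
  exact (Set.finite_Iic L).isOpen_biInter fun i _ => hV.preimage (T ^ i).continuous

lemma exists_le_pow_apply_mem (hb : IsDivergentWeight b) (hx : x ∈ UFHCaSet b T) {U : Set X}
    (hU : IsOpen U) (hne : U.Nonempty) (k : ℕ) : ∃ n, k ≤ n ∧ (T ^ n) x ∈ U := by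
  obtain ⟨δ, hδ, h⟩ := exists_isHeavy_of_upperDensWith_pos hb.pos (hx U hU hne)
  obtain ⟨n, hn⟩ := h.exists_add_mem hb hδ k
  exact ⟨n + k, Nat.le_add_left k n, hn⟩

theorem syndetic_transitSet (hb : IsDivergentWeight b) (hx : x ∈ UFHCaSet b T) {P W : Set X}
    (hP : IsOpen P) (hPne : P.Nonempty) (hW : IsOpen W) (hWne : W.Nonempty) :
    Syndetic (transitSet T P W) := by
  obtain ⟨a, -, ha⟩ := exists_le_pow_apply_mem hb hx hP hPne 0
  obtain ⟨o, hao, ho⟩ := exists_le_pow_apply_mem hb hx hW hWne a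
  -- if `α` and `α + e` are both returns of `x` to `V`, then `e + (o - a)` carries
  -- `T^(a + α) x ∈ P` to `T^(o + α + e) x ∈ W`
  set V := (T ^ a) ⁻¹' P ∩ (T ^ o) ⁻¹' W
  have hV : IsOpen V := (hP.preimage (T ^ a).continuous).inter (hW.preimage (T ^ o).continuous)
  obtain ⟨θ, hθ, hR⟩ := exists_isHeavy_of_upperDensWith_pos hb.pos (hx V hV ⟨x, ha, ho⟩)
  refine (hR.syndetic_isHeavy_inter_shiftSet hb hθ).of_add_mem (o - a) fun e he => ?_
  obtain ⟨α, hα, hαe⟩ := he.nonempty hb.pos (by positivity)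
  refine ⟨(T ^ a) ((T ^ α) x), hα.1, ?_⟩
  have : (T ^ (e + (o - a))) ((T ^ a) ((T ^ α) x)) = (T ^ o) ((T ^ (α + e)) x) := by
    simp only [← pow_add_apply]
    congr 2
    omega
  rw [this]
  exact hαe.2

theorem isThick_transitSet_of_zero_mem (hb : IsDivergentWeight b) (hx : x ∈ UFHCaSet b T)
    {U Q : Set X} (hU : IsOpen U) (h0 : 0 ∈ U) (hQ : IsOpen Q) (hQne : Q.Nonempty) :
    IsThick (transitSet T U Q) := by
  intro L
  obtain ⟨j, -, hj⟩ := exists_le_pow_apply_mem hb hx (isOpen_setOf_forall_le_pow_apply_mem T hU L)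
    ⟨0, fun i _ => by simpa using h0⟩ 0
  obtain ⟨m, hm, hmQ⟩ := exists_le_pow_apply_mem hb hx hQ hQne (j + L)
  refine ⟨m - j - L, fun s hs => ⟨(T ^ (L - s)) ((T ^ j) x), hj (L - s) (Nat.sub_le L s), ?_⟩⟩
  rwa [← pow_add_apply, ← pow_add_apply, show m - j - L + s + (L - s) + j = m by omega]

theorem isThick_transitSet (hb : IsDivergentWeight b) (hx : x ∈ UFHCaSet b T) {P Q : Set X}
    (hP : IsOpen P) (hPne : P.Nonempty) (hQ : IsOpen Q) (hQne : Q.Nonempty) :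
    IsThick (transitSet T P Q) := by
  obtain ⟨p, hp⟩ := hPne
  obtain ⟨ε, hε, hεP⟩ := Metric.isOpen_iff.1 hP p hp
  obtain ⟨v, hv⟩ := hQne
  obtain ⟨ε', hε', hεQ⟩ := Metric.isOpen_iff.1 hQ v hv
  have hsum : transitSet T (Metric.ball p (ε / 2)) (Metric.ball 0 (ε' / 2)) ∩
      transitSet T (Metric.ball 0 (ε / 2)) (Metric.ball v (ε' / 2)) ⊆ transitSet T P Q := by
    refine (transitSet_inter_subset_add _ _ _ _).trans (transitSet_mono ?_ ?_)
    · rwa [ball_add_ball (half_pos hε) (half_pos hε), add_zero, add_halves]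
    · rwa [ball_add_ball (half_pos hε') (half_pos hε'), zero_add, add_halves]
  intro L
  have hS := syndetic_transitSet hb hx Metric.isOpen_ball ⟨p, Metric.mem_ball_self (half_pos hε)⟩
    (isOpen_setOf_forall_le_pow_apply_mem T (Metric.isOpen_ball (x := 0) (ε := ε' / 2)) L)
    ⟨0, fun i _ => by simpa using half_pos hε'⟩
  obtain ⟨t, ⟨y, hy, hTy⟩, ht⟩ := hS.exists_forall_add_mem
    (isThick_transitSet_of_zero_mem hb hx Metric.isOpen_ball (Metric.mem_ball_self (half_pos hε))
      Metric.isOpen_ball ⟨v, Metric.mem_ball_self (half_pos hε')⟩) L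
  exact ⟨t, fun s hs => hsum ⟨⟨y, hy, by rw [add_comm, pow_add_apply]; exact hTy s hs⟩, ht s hs⟩⟩

theorem IsHeavy.exists_isHeavy_subset_shiftSet_mapsTo (hb : IsDivergentWeight b)
    (hx : x ∈ UFHCaSet b T) {A : Set ℕ} {θ : ℝ} (hA : IsHeavy b A θ) (hθ : 0 < θ) {ι : Type*}
    (s : Finset ι) :
    ∃ δ > 0, ∀ (q : ι → ℕ) (U : ι → Set X), (∀ i, IsOpen (U i)) → (∀ i, (U i).Nonempty) →
      ∃ (A' : Set ℕ) (e : ι → ℕ) (Ξ : Set X), IsHeavy b A' δ ∧ A' ⊆ A ∧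
        (∀ i ∈ s, A' ⊆ shiftSet A (e i)) ∧ IsOpen Ξ ∧ Ξ.Nonempty ∧
        ∀ i ∈ s, Set.MapsTo (T ^ (q i + e i)) Ξ (U i) := by
  classical
  induction s using Finset.induction_on with
  | empty =>
    exact ⟨θ, hθ, fun q U _ _ => ⟨A, 0, Set.univ, hA, subset_rfl, by simp, isOpen_univ,
      Set.univ_nonempty, by simp⟩⟩
  | insert a s ha ih =>
    obtain ⟨δ, hδ, hchain⟩ := ih
    refine ⟨δ ^ 2 / 4, by positivity, fun q U hU hUne => ?_⟩
    obtain ⟨A', e, Ξ, hA', hA'A, hA'e, hΞ, hΞne, hΞU⟩ := hchain q U hU hUne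
    -- syndetic good gaps of `A'` meet the thick set of times carrying `Ξ` into `U a`
    obtain ⟨ea, hea, hz⟩ := (hA'.syndetic_isHeavy_inter_shiftSet hb hδ).exists_forall_add_mem
      ((isThick_transitSet hb hx hΞ hΞne (hU a) (hUne a)).shift (q a)) 0
    obtain ⟨z, hzΞ, hzU⟩ := hz 0 le_rfl
    refine ⟨A' ∩ shiftSet A' ea, Function.update e a ea, Ξ ∩ (T ^ (q a + ea)) ⁻¹' U a, hea,
      fun n hn => hA'A hn.1, fun i hi => ?_, hΞ.inter ((hU a).preimage (T ^ _).continuous),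
      ⟨z, hzΞ, by simpa [add_comm] using hzU⟩, fun i hi => ?_⟩
    · rcases Finset.mem_insert.1 hi with rfl | hi
      · rw [Function.update_self]
        exact fun n hn => shiftSet_mono hA'A _ hn.2
      · rw [Function.update_of_ne (ne_of_mem_of_not_mem hi ha)]
        exact fun n hn => hA'e i hi hn.1
    · rcases Finset.mem_insert.1 hi with rfl | hi
      · rw [Function.update_self]
        exact fun z hz => hz.2
      · rw [Function.update_of_ne (ne_of_mem_of_not_mem hi ha)]
        exact fun z hz => hΞU i hi hz.1

theorem exists_isHeavy_setOf_forall_pow_add_apply_mem (hb : IsDivergentWeight b)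
    (hx : x ∈ UFHCaSet b T) {ι : Type*} [Finite ι] {V : ι → Set X} (hV : ∀ i, IsOpen (V i))
    (hVne : ∀ i, (V i).Nonempty) :
    ∃ δ > 0, ∀ U : ι → Set X, (∀ i, IsOpen (U i)) → (∀ i, (U i).Nonempty) →
      ∃ m : ι → ℕ, (∀ i, (T ^ m i) x ∈ U i) ∧
        IsHeavy b {j | ∀ i, (T ^ (j + m i)) x ∈ V i} δ := by
  have := Fintype.ofFinite ι
  choose q hq using fun i => exists_le_pow_apply_mem hb hx (hV i) (hVne i) 0
  set O := ⋂ i, (T ^ q i) ⁻¹' V i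
  have hO : IsOpen O := isOpen_iInter_of_finite fun i => (hV i).preimage (T ^ q i).continuous
  obtain ⟨θ, hθ, hR⟩ := exists_isHeavy_of_upperDensWith_pos hb.pos
    (hx O hO ⟨x, Set.mem_iInter.2 fun i => (hq i).2⟩)
  obtain ⟨δ, hδ, hchain⟩ :=
    hR.exists_isHeavy_subset_shiftSet_mapsTo hb hx hθ (Finset.univ : Finset ι)
  refine ⟨δ / 2, half_pos hδ, fun U hU hUne => ?_⟩
  obtain ⟨A', e, Ξ, hA', -, hA'e, hΞ, hΞne, hΞU⟩ := hchain q U hU hUne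
  obtain ⟨σ, -, hσ⟩ := exists_le_pow_apply_mem hb hx hΞ hΞne 0
  refine ⟨fun i => q i + e i + σ, fun i => ?_,
    (hA'.shift hb hδ σ).mono (fun n => (hb.pos n).le) fun j hj i => ?_⟩
  · rw [pow_add_apply]
    exact hΞU i (Finset.mem_univ i) hσ
  · have hjO : (T ^ (j + σ + e i)) x ∈ O := hA'e i (Finset.mem_univ i) hj
    rw [show j + (q i + e i + σ) = q i + (j + σ + e i) by ring, pow_add_apply]
    exact Set.mem_iInter.1 hjO i

end Dynamics

section Baire

variable {Y : Type*} [NormedAddCommGroup Y] [NormedSpace ℂ Y] {b : ℕ → ℝ}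

lemma isOpen_setOf_le_wSum_retSet (hb : 0 ≤ b) (S : Y →L[ℂ] Y) {V : Set Y} (hV : IsOpen V)
    (c : ℝ) (N : ℕ) : IsOpen {y | c ≤ wSum b (retSet S y V) N} := by
  refine isOpen_iff_eventually.2 fun y hy => ?_
  have hnear : ∀ᶠ y' in 𝓝 y, ∀ j ∈ Finset.range (N + 1), j ∈ retSet S y V → j ∈ retSet S y' V :=
    (eventually_all_finset _).2 fun j _ => by
      by_cases hj : j ∈ retSet S y V
      · exact Eventually.mono ((S ^ j).continuous.continuousAt.preimage_mem_nhds
          (hV.mem_nhds hj)) fun _ hy' _ => hy'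
      · exact Eventually.of_forall fun _ h => absurd h hj
  exact hnear.mono fun y' hy' =>
    hy.trans (wSum_le_wSum hb fun j hjN hj => hy' j (Finset.mem_range.2 (by omega)) hj)

theorem nonempty_UFHCaSet_of_dense_isHeavy (hb : ∀ n, 0 < b n) [BaireSpace Y]
    [SecondCountableTopology Y] (S : Y →L[ℂ] Y)
    (h : ∀ V : Set Y, IsOpen V → V.Nonempty → ∃ δ > 0, Dense {y | IsHeavy b (retSet S y V) δ}) :
    (UFHCaSet b S).Nonempty := by
  obtain ⟨B, hBc, hB0, hB⟩ := TopologicalSpace.exists_countable_basis Y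
  have := hBc.to_subtype
  choose δ hδ hdense using fun V : B =>
    h V (hB.isOpen V.2) (Set.nonempty_iff_ne_empty.2 fun hV => hB0 (hV ▸ V.2))
  set G : B × ℕ → Set Y := fun p =>
    ⋃ N ≥ p.2, {y | δ p.1 * cumWeight b N ≤ wSum b (retSet S y p.1) N}
  have hGo : ∀ p, IsOpen (G p) := fun p => isOpen_biUnion fun N _ =>
    isOpen_setOf_le_wSum_retSet (fun n => (hb n).le) S (hB.isOpen p.1.2) _ N
  have hGd : ∀ p, Dense (G p) := fun p => (hdense p.1).mono fun y hy => by
    obtain ⟨N, hN, hyN⟩ := Filter.frequently_atTop.1 hy p.2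
    exact Set.mem_biUnion hN hyN
  obtain ⟨y, hy⟩ := (dense_iInter_of_isOpen hGo hGd).nonempty
  refine ⟨y, fun U hU ⟨u, hu⟩ => ?_⟩
  obtain ⟨V, hVB, -, hVU⟩ := hB.exists_subset_of_mem_open hu hU
  have hheavy : IsHeavy b (retSet S y V) (δ ⟨V, hVB⟩) := Filter.frequently_atTop.2 fun N₀ => by
    obtain ⟨N, hN, hyN⟩ := Set.mem_iUnion₂.1 (Set.mem_iInter.1 hy (⟨V, hVB⟩, N₀))
    exact ⟨N, hN, hyN⟩
  exact (hheavy.mono (fun n => (hb n).le) fun n hn => hVU hn).upperDensWith_pos hb (hδ _)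

end Baire

section Product

variable {X : Type*} [NormedAddCommGroup X] [NormedSpace ℂ X] {b : ℕ → ℝ}

lemma nfold_pow_apply (T : X →L[ℂ] X) {n : ℕ} (m : ℕ) (y : Fin n → X) (i : Fin n) :
    ((nfold T n ^ m) y) i = (T ^ m) (y i) := by
  induction m generalizing y with
  | zero => rfl
  | succ m ih =>
    rw [pow_succ, pow_succ]
    exact ih (nfold T n y)

theorem exists_dense_setOf_isHeavy_retSet_nfold (hb : IsDivergentWeight b) {T : X →L[ℂ] X}
    {x : X} (hx : x ∈ UFHCaSet b T) {n : ℕ} {V : Set (Fin n → X)} (hV : IsOpen V)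
    (hVne : V.Nonempty) : ∃ δ > 0, Dense {y | IsHeavy b (retSet (nfold T n) y V) δ} := by
  obtain ⟨v, hv⟩ := hVne
  obtain ⟨ε, hε, hεV⟩ := Metric.isOpen_iff.1 hV v hv
  obtain ⟨δ, hδ, hkey⟩ := exists_isHeavy_setOf_forall_pow_add_apply_mem hb hx
    (V := fun i => Metric.ball (v i) ε) (fun _ => Metric.isOpen_ball)
    fun i => ⟨v i, Metric.mem_ball_self hε⟩
  refine ⟨δ, hδ, dense_iff_inter_open.2 fun W hW ⟨w, hw⟩ => ?_⟩
  obtain ⟨ρ, hρ, hρW⟩ := Metric.isOpen_iff.1 hW w hw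
  obtain ⟨m, hm, hheavy⟩ := hkey (fun i => Metric.ball (w i) ρ) (fun _ => Metric.isOpen_ball)
    fun i => ⟨w i, Metric.mem_ball_self hρ⟩
  refine ⟨fun i => (T ^ m i) x, hρW ?_, hheavy.mono (fun n => (hb.pos n).le) fun j hj => ?_⟩
  · rw [ball_pi _ hρ]
    exact fun i _ => hm i
  · show (nfold T n ^ j) (fun i => (T ^ m i) x) ∈ V
    refine hεV ?_
    rw [ball_pi _ hε]
    intro i _
    rw [nfold_pow_apply, ← pow_add_apply]
    exact hj i

end Product

theorem stmt_15_general (b : ℕ → ℝ) (hb : memB b)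
    {X : Type*} [NormedAddCommGroup X] [NormedSpace ℂ X] [CompleteSpace X]
    [TopologicalSpace.SeparableSpace X] (T : X →L[ℂ] X)
    (hT : (UFHCaSet b T).Nonempty) (n : ℕ) :
    (UFHCaSet b (nfold T n)).Nonempty := by
  obtain ⟨x, hx⟩ := hT
  exact nonempty_UFHCaSet_of_dense_isHeavy hb.isDivergentWeight.pos (nfold T n)
    fun V hV hVne => exists_dense_setOf_isHeavy_retSet_nfold hb.isDivergentWeight hx hV hVne

/-- If `T` is `U`-frequently hypercyclic with respect to some `b ∈ B`, then every `n`-fold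
product `T × ⋯ × T` (`n ≥ 1`) is `U`-frequently hypercyclic with respect to `b`. -/
theorem stmt_15 (b : ℕ → ℝ) (hb : memB b)
    {X : Type*} [NormedAddCommGroup X] [NormedSpace ℂ X] [CompleteSpace X]
    [TopologicalSpace.SeparableSpace X] (hX : ¬FiniteDimensional ℂ X) (T : X →L[ℂ] X)
    (hT : (UFHCaSet b T).Nonempty) (n : ℕ) (hn : 1 ≤ n) :
    (UFHCaSet b (nfold T n)).Nonempty :=
  stmt_15_general b hb T hT n
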